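/- arXiv:1408.1597 — 3 statements merged into one kernel-verified Lean document; each statement's English description precedes it below -/
import Mathlib

section
/- Let ℓ be an odd prime with ℓ ≡ −1 (mod 8) and let r be a positive integer not divisible by ℓ, and let n be a nonnegative integer. Then c₃(ℓ²n + rℓ), the number of ordered triples (x, y, z) of positive integers with x² + y² + z² = ℓ²n + rℓ, is even. -/
/-!
Swapping the first two coordinates is an involution on the representations of `N` as a sum of
three positive squares, so `c₃(N)` is even unless it has a fixed point, i.e. `N = 2x² + z²`.
For `N = ℓ²n + rℓ` this is impossible: `-2` is not a square modulo `ℓ ≡ 7 (mod 8)`, so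
`ℓ ∣ 2x² + z²` forces `ℓ ∣ x` and `ℓ ∣ z`, whence `ℓ² ∣ N` and `ℓ ∣ r`.
-/

/-- `sqRep k n` is the number of ordered `k`-tuples `(x₁, …, x_k)` of positive integers
with `x₁² + ⋯ + x_k² = n`. -/
noncomputable def sqRep (k n : ℕ) : ℕ :=
  Nat.card {v : Fin k → ℕ+ // ∑ i, (v i : ℕ) ^ 2 = n}

theorem Function.Involutive.even_natCard {α : Type*} [Finite α] {f : α → α}
    (hf : Function.Involutive f) (hne : ∀ a, f a ≠ a) : Even (Nat.card α) := by
  classical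
  have := Fintype.ofFinite α
  let g : Function.End α := f
  have hmod := Equiv.Perm.card_fixedPoints_modEq (p := 2) (n := 1) (f := g) (funext hf)
  have hfix : Function.fixedPoints g = ∅ := Set.eq_empty_of_forall_notMem hne
  simp only [hfix, Set.card_empty] at hmod
  rw [Nat.card_eq_fintype_card, Nat.even_iff]
  exact hmod

theorem finite_sumSq_eq (k n : ℕ) : Finite {v : Fin k → ℕ+ // ∑ i, (v i : ℕ) ^ 2 = n} := by
  refine Set.Finite.to_subtype ((Set.finite_Iic fun _ => n.succPNat).subset ?_)
  intro v hv i
  have hle : (v i : ℕ) ^ 2 ≤ n := hv ▸ Finset.single_le_sum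
    (f := fun j => (v j : ℕ) ^ 2) (fun j _ => Nat.zero_le _) (Finset.mem_univ i)
  have : (v i : ℕ) ≤ n + 1 := by nlinarith [(v i).pos]
  exact_mod_cast this

theorem even_sqRep_of_forall_ne {k n : ℕ} (i j : Fin k)
    (h : ∀ v : Fin k → ℕ+, ∑ i, (v i : ℕ) ^ 2 = n → v i ≠ v j) : Even (sqRep k n) := by
  have := finite_sumSq_eq k n
  let swap : {v : Fin k → ℕ+ // ∑ i, (v i : ℕ) ^ 2 = n} →
      {v : Fin k → ℕ+ // ∑ i, (v i : ℕ) ^ 2 = n} :=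
    fun v => ⟨v.1 ∘ Equiv.swap i j,
      (Fintype.sum_equiv (Equiv.swap i j) _ _ fun _ => rfl).trans v.2⟩
  refine Function.Involutive.even_natCard (f := swap) (fun v => ?_) (fun v hv => ?_)
  · ext l; simp [swap]
  · apply h v.1 v.2
    simpa [swap] using congrFun (congrArg Subtype.val hv) j

theorem even_sqRep_three_of_forall_ne {N : ℕ} (h : ∀ x z : ℕ, 2 * x ^ 2 + z ^ 2 ≠ N) :
    Even (sqRep 3 N) := by
  refine even_sqRep_of_forall_ne 0 1 fun v hv hv01 => h (v 1) (v 2) ?_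
  rw [← hv, Fin.sum_univ_three, hv01]
  ring

theorem eq_zero_and_eq_zero_of_mul_sq_add_sq_eq_zero {F : Type*} [Field F] {a x z : F}
    (ha : ¬IsSquare (-a)) (h : a * x ^ 2 + z ^ 2 = 0) : x = 0 ∧ z = 0 := by
  have hx : x = 0 := by
    by_contra hx
    refine ha ⟨z / x, ?_⟩
    field_simp
    linear_combination -h
  subst hx
  exact ⟨rfl, pow_eq_zero_iff two_ne_zero |>.mp (by simpa using h)⟩

theorem Nat.Prime.dvd_of_dvd_mul_sq_add_sq {p a x z : ℕ} (hp : p.Prime)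
    (ha : ¬IsSquare (-a : ZMod p)) (h : p ∣ a * x ^ 2 + z ^ 2) : p ∣ x ∧ p ∣ z := by
  have := Fact.mk hp
  simp only [← ZMod.natCast_eq_zero_iff] at h ⊢
  push_cast at h
  exact eq_zero_and_eq_zero_of_mul_sq_add_sq_eq_zero ha h

theorem Nat.Prime.mul_sq_add_sq_ne {p a r : ℕ} (hp : p.Prime) (ha : ¬IsSquare (-a : ZMod p))
    (hr : ¬p ∣ r) (n x z : ℕ) : a * x ^ 2 + z ^ 2 ≠ p ^ 2 * n + r * p := by
  intro h
  obtain ⟨⟨x', rfl⟩, ⟨z', rfl⟩⟩ :=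
    hp.dvd_of_dvd_mul_sq_add_sq ha (h ▸ dvd_add (dvd_mul_of_dvd_left
      (dvd_pow_self p two_ne_zero) n) (dvd_mul_left p r))
  have hpr : p ^ 2 ∣ r * p := (Nat.dvd_add_right (dvd_mul_right _ n)).mp
    (h ▸ ⟨a * x' ^ 2 + z' ^ 2, by ring⟩)
  rw [sq] at hpr
  exact hr (Nat.dvd_of_mul_dvd_mul_right hp.pos hpr)

theorem c3_ell_sq_even_general (ℓ : ℕ) (hℓ : ℓ.Prime) (hmod : ℓ % 8 = 7)
    (r : ℕ) (hndvd : ¬ ℓ ∣ r) (n : ℕ) :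
    Even (sqRep 3 (ℓ ^ 2 * n + r * ℓ)) := by
  have := Fact.mk hℓ
  have hns : ¬IsSquare (-2 : ZMod ℓ) := by
    rw [ZMod.exists_sq_eq_neg_two_iff (by omega)]
    omega
  exact even_sqRep_three_of_forall_ne (hℓ.mul_sq_add_sq_ne (a := 2) (by exact_mod_cast hns) hndvd n)

theorem c3_ell_sq_even (ℓ : ℕ) (hℓ : ℓ.Prime) (hodd : Odd ℓ) (hmod : ℓ % 8 = 7)
    (r : ℕ) (hr : 0 < r) (hndvd : ¬ ℓ ∣ r) (n : ℕ) :
    Even (sqRep 3 (ℓ ^ 2 * n + r * ℓ)) :=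
  c3_ell_sq_even_general ℓ hℓ hmod r hndvd n
end

section
/- If the positive integer n is not the square of an odd positive integer, then c₄(4n) ≡ c₄(n) (mod 2). Equivalently, the number of ordered quadruples (x, y, z, w) of odd positive integers with x² + y² + z² + w² = 4n is even. -/
/-!
Squares are `0` or `1` mod `4`, so in a representation of `4n` by four squares the entries are
either all even or all odd. Halving identifies the all-even representations with those of `n`.
The all-odd ones are permuted by the coordinate involutions `(01)(23)` and `(02)(13)`; since an
involution changes a finite set's size mod `2` only by its fixed points, and the quadruples
fixed by both are the constant ones `(a, a, a, a)` with `4a² = 4n`, the all-odd count is even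
unless `n` is an odd square.
-/

open Function Set

theorem Function.Involutive.comp_right {ι α : Type*} {σ : ι → ι} (hσ : Involutive σ) :
    Involutive fun v : ι → α => v ∘ σ :=
  fun v => funext fun i => congrArg v (hσ i)

namespace Set

section Involution

variable {α : Type*} {f : α → α} {s : Set α}

theorem even_ncard_of_involutive (hf : Involutive f) (hfs : MapsTo f s s)
    (hfix : ∀ a ∈ s, f a ≠ a) : Even s.ncard := by
  by_cases hs : s.Finite
  · rw [ncard_eq_toFinset_card s hs, even_iff_two_dvd, ← ZMod.natCast_eq_zero_iff,
      Finset.card_eq_sum_ones, Nat.cast_sum, Nat.cast_one]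
    exact Finset.sum_involution (fun a _ => f a) (fun _ _ => by decide)
      (fun a ha _ => hfix a (by simpa using ha))
      (fun a ha => by simpa using hfs (by simpa using ha))
      (fun a _ => hf a)
  · rw [Infinite.ncard hs]
    exact Even.zero

theorem ncard_modEq_ncard_inter_fixedPoints (hf : Involutive f) (hs : s.Finite)
    (hfs : MapsTo f s s) : s.ncard ≡ (s ∩ fixedPoints f).ncard [MOD 2] := by
  obtain ⟨m, hm⟩ : Even (s \ fixedPoints f).ncard :=
    even_ncard_of_involutive hf (fun a ha => ⟨hfs ha.1, fun hfa => ha.2 (hf.injective hfa)⟩)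
      (fun a ha => ha.2)
  rw [← ncard_inter_add_ncard_sdiff_eq_ncard s (fixedPoints f) hs, hm, Nat.ModEq]
  omega

end Involution

section CoordinatePermutation

variable {ι α : Type*}

theorem mapsTo_comp_right_setOf_forall (σ : ι → ι) (p : α → Prop) :
    MapsTo (fun v : ι → α => v ∘ σ) {v | ∀ i, p (v i)} {v | ∀ i, p (v i)} :=
  fun _ hv i => hv (σ i)

theorem mapsTo_comp_right_fixedPoints {σ τ : ι → ι} (h : Function.Commute σ τ) :
    MapsTo (fun v : ι → α => v ∘ τ) (fixedPoints (· ∘ σ)) (fixedPoints (· ∘ σ)) := by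
  intro v (hv : v ∘ σ = v)
  change v ∘ τ ∘ σ = v ∘ τ
  conv_rhs => rw [← hv]
  exact funext fun i => congrArg v (h i).symm

end CoordinatePermutation

end Set

theorem Nat.sq_mod_four_eq_mod_two (x : ℕ) : x ^ 2 % 4 = x % 2 := by
  rcases Nat.even_or_odd' x with ⟨q, rfl | rfl⟩ <;> ring_nf <;> omega

theorem PNat.exists_eq_two_mul_of_even {x : ℕ+} (hx : Even (x : ℕ)) : ∃ y : ℕ+, x = 2 * y := by
  obtain ⟨r, hr⟩ := hx
  have hr0 : 0 < r := by have := x.pos; omega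
  exact ⟨r.toPNat', PNat.eq (by simp [PNat.toPNat'_coe hr0]; omega)⟩

def sumSqSet (k n : ℕ) : Set (Fin k → ℕ+) := {v | ∑ i, (v i : ℕ) ^ 2 = n}

theorem sqRep_eq_ncard (k n : ℕ) : sqRep k n = (sumSqSet k n).ncard := rfl

theorem finite_sumSqSet (k n : ℕ) : (sumSqSet k n).Finite := by
  refine (finite_Iic fun _ => n.succPNat).subset fun v hv i => ?_
  have hvi : (v i : ℕ) ^ 2 ≤ n :=
    (Finset.single_le_sum (fun j _ => Nat.zero_le ((v j : ℕ) ^ 2)) (Finset.mem_univ i)).trans_eq hv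
  have : (v i : ℕ) ≤ (v i : ℕ) ^ 2 := Nat.le_self_pow two_ne_zero _
  rw [← PNat.coe_le_coe, Nat.succPNat_coe]
  omega

theorem image_two_mul_sumSqSet (k n : ℕ) :
    (fun v i => 2 * v i) '' sumSqSet k n = sumSqSet k (4 * n) ∩ {v | ∀ i, Even (v i : ℕ)} := by
  ext w
  constructor
  · rintro ⟨v, hv, rfl⟩
    refine ⟨?_, fun i => by simp⟩
    simp only [sumSqSet, mem_ofPred_eq, PNat.mul_coe, mul_pow] at hv ⊢
    rw [← Finset.mul_sum, hv]
    norm_num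
  · rintro ⟨hw, heven⟩
    choose v hv using fun i => PNat.exists_eq_two_mul_of_even (heven i)
    refine ⟨v, ?_, funext fun i => (hv i).symm⟩
    simp only [sumSqSet, mem_ofPred_eq, hv, PNat.mul_coe, mul_pow, ← Finset.mul_sum] at hw ⊢
    norm_num at hw
    omega

theorem sqRep_eq_ncard_sumSqSet_four_mul_inter_even (k n : ℕ) :
    sqRep k n = (sumSqSet k (4 * n) ∩ {v | ∀ i, Even (v i : ℕ)}).ncard := by
  rw [← image_two_mul_sumSqSet, ncard_image_of_injective, sqRep_eq_ncard]
  exact fun v w hvw => funext fun i => mul_left_cancel (congrFun hvw i)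

theorem all_even_or_all_odd_of_sum_sq_eq_four_mul {v : Fin 4 → ℕ} {n : ℕ}
    (h : ∑ i, v i ^ 2 = 4 * n) : (∀ i, Even (v i)) ∨ ∀ i, Odd (v i) := by
  have h0 := Nat.sq_mod_four_eq_mod_two (v 0)
  have h1 := Nat.sq_mod_four_eq_mod_two (v 1)
  have h2 := Nat.sq_mod_four_eq_mod_two (v 2)
  have h3 := Nat.sq_mod_four_eq_mod_two (v 3)
  rw [Fin.sum_univ_four] at h
  have : (v 0 % 2 = 0 ∧ v 1 % 2 = 0 ∧ v 2 % 2 = 0 ∧ v 3 % 2 = 0) ∨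
      (v 0 % 2 = 1 ∧ v 1 % 2 = 1 ∧ v 2 % 2 = 1 ∧ v 3 % 2 = 1) := by
    omega
  simp only [Nat.even_iff, Nat.odd_iff]
  rcases this with h | h <;> [left; right] <;> intro i <;> fin_cases i <;> simp [h]

theorem sqRep_four_mul_eq (n : ℕ) : sqRep 4 (4 * n) =
    sqRep 4 n + (sumSqSet 4 (4 * n) ∩ {v | ∀ i, Odd (v i : ℕ)}).ncard := by
  have hodd : sumSqSet 4 (4 * n) \ {v | ∀ i, Even (v i : ℕ)} =
      sumSqSet 4 (4 * n) ∩ {v | ∀ i, Odd (v i : ℕ)} := by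
    ext v
    simp only [mem_sdiff, mem_inter_iff, mem_ofPred_eq, sumSqSet]
    refine and_congr_right fun hv => ?_
    rcases all_even_or_all_odd_of_sum_sq_eq_four_mul hv with he | ho
    · exact iff_of_false (not_not_intro he) fun ho => Nat.not_even_iff_odd.mpr (ho 0) (he 0)
    · exact iff_of_true (fun he => Nat.not_even_iff_odd.mpr (ho 0) (he 0)) ho
  rw [sqRep_eq_ncard_sumSqSet_four_mul_inter_even 4 n, ← hodd, sqRep_eq_ncard]
  exact (ncard_inter_add_ncard_sdiff_eq_ncard _ _ (finite_sumSqSet 4 (4 * n))).symm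

theorem mapsTo_comp_right_sumSqSet {k : ℕ} {σ : Fin k → Fin k} (hσ : Involutive σ) (n : ℕ) :
    MapsTo (fun v => v ∘ σ) (sumSqSet k n) (sumSqSet k n) :=
  fun v hv => (Equiv.sum_comp hσ.toPerm fun i => (v i : ℕ) ^ 2).trans hv

theorem even_ncard_sumSqSet_four_mul_inter_odd {n : ℕ}
    (h : ¬ ∃ a : ℕ, 0 < a ∧ Odd a ∧ n = a ^ 2) :
    Even (sumSqSet 4 (4 * n) ∩ {v | ∀ i, Odd (v i : ℕ)}).ncard := by
  set S := sumSqSet 4 (4 * n) ∩ {v | ∀ i, Odd (v i : ℕ)}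
  have hS : S.Finite := (finite_sumSqSet 4 (4 * n)).subset inter_subset_left
  have hmaps (σ : Fin 4 → Fin 4) (hσ : Involutive σ) : MapsTo (· ∘ σ) S S :=
    (mapsTo_comp_right_sumSqSet hσ _).inter_inter
      (mapsTo_comp_right_setOf_forall σ fun x : ℕ+ => Odd (x : ℕ))
  have hσ₁ : Involutive (![1, 0, 3, 2] : Fin 4 → Fin 4) := by unfold Involutive; decide
  have hσ₂ : Involutive (![2, 3, 0, 1] : Fin 4 → Fin 4) := by unfold Involutive; decide
  have hcomm : Function.Commute (![1, 0, 3, 2] : Fin 4 → Fin 4) ![2, 3, 0, 1] := by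
    unfold Function.Commute Semiconj; decide
  have h₁ := ncard_modEq_ncard_inter_fixedPoints hσ₁.comp_right hS (hmaps _ hσ₁)
  have h₂ := ncard_modEq_ncard_inter_fixedPoints hσ₂.comp_right (hS.inter_of_left _)
    ((hmaps _ hσ₂).inter_inter (mapsTo_comp_right_fixedPoints hcomm))
  have hempty : S ∩ fixedPoints (· ∘ ![1, 0, 3, 2]) ∩ fixedPoints (· ∘ ![2, 3, 0, 1]) = ∅ := by
    refine eq_empty_of_forall_notMem fun v ⟨⟨⟨hv, hodd⟩, hfix₁⟩, hfix₂⟩ =>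
      h ⟨v 0, (v 0).pos, hodd 0, ?_⟩
    have e₁ : v 1 = v 0 := congrFun (mem_fixedPoints.mp hfix₁).eq 0
    have e₂ : v 2 = v 0 := congrFun (mem_fixedPoints.mp hfix₂).eq 0
    have e₃ : v 3 = v 0 := (congrFun (mem_fixedPoints.mp hfix₂).eq 1).trans e₁
    rw [sumSqSet, mem_ofPred_eq, Fin.sum_univ_four, e₁, e₂, e₃] at hv
    omega
  rw [hempty, ncard_empty] at h₂
  exact Nat.even_iff.mpr (h₁.trans h₂)

theorem c4_four_mul_mod_two_general (n : ℕ)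
    (h : ¬ ∃ a : ℕ, 0 < a ∧ Odd a ∧ n = a ^ 2) :
    sqRep 4 (4 * n) ≡ sqRep 4 n [MOD 2] := by
  obtain ⟨m, hm⟩ := even_ncard_sumSqSet_four_mul_inter_odd h
  rw [sqRep_four_mul_eq, hm, Nat.ModEq]
  omega

theorem c4_four_mul_mod_two (n : ℕ) (hn : 0 < n)
    (h : ¬ ∃ a : ℕ, 0 < a ∧ Odd a ∧ n = a ^ 2) :
    sqRep 4 (4 * n) ≡ sqRep 4 n [MOD 2] :=
  c4_four_mul_mod_two_general n h
end

section
/- If the positive integer n satisfies n ≢ 1, 2, 5 (mod 8), then c₅(4n) ≡ c₅(n) (mod 2). Equivalently, the number of ordered quintuples (x, y, z, w, v) of positive integers, not all even, with x² + y² + z² + w² + v² = 4n is even. -/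
/-!
Swapping two coordinates of equal weight is an involution on the solutions of
`∑ wᵢ xᵢ² = m`, and its fixed points are the solutions of the equation in which the two
coordinates are merged into one of double weight. Merging the five unit weights pairwise
gives `c₅(m) ≡ #{(a, e) : 4a² + e² = m} (mod 2)`. For `m = 4n` the coordinate `e` is even,
and `e = 2y` turns the count into `#{a² + y² = n}`; for `n ≢ 1, 2, 5 (mod 8)` every solution
of `a² + y² = n` has `a` even, and `a = 2x` turns it back into `#{4x² + y² = n}`.
-/

open Function

theorem Function.Involutive.card_modEq_card_fixedPoints {α : Type*} [Finite α] {f : α → α}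
    (hf : Involutive f) : Nat.card α ≡ Nat.card (fixedPoints f) [MOD 2] := by
  classical
  have : Fact (Nat.Prime 2) := ⟨Nat.prime_two⟩
  cases nonempty_fintype α
  have hf2 : (show Function.End α from f) ^ 2 ^ 1 = 1 := funext hf
  simpa only [Nat.card_eq_fintype_card] using Equiv.Perm.card_fixedPoints_modEq hf2

theorem Function.Involutive.card_subtype_modEq_card_fixed {α : Type*} {p : α → Prop}
    [Finite {a // p a}] {f : α → α} (hf : Involutive f) (hp : ∀ a, p a → p (f a)) :
    Nat.card {a // p a} ≡ Nat.card {a // p a ∧ f a = a} [MOD 2] := by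
  have hf' : Involutive (Subtype.map f hp) := fun a => Subtype.ext (hf a)
  have e : fixedPoints (Subtype.map f hp) ≃ {a // p a ∧ f a = a} :=
    { toFun := fun a => ⟨a.1.1, a.1.2, congrArg Subtype.val a.2⟩
      invFun := fun a => ⟨⟨a.1, a.2.1⟩, Subtype.ext a.2.2⟩
      left_inv := fun _ => rfl
      right_inv := fun _ => rfl }
  rw [← Nat.card_congr e]
  exact hf'.card_modEq_card_fixedPoints

theorem Function.comp_swap_eq_self_iff {α β : Type*} [DecidableEq α] {f : α → β} {i j : α} :
    f ∘ Equiv.swap i j = f ↔ f i = f j := by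
  refine ⟨fun h => by simpa using congrFun h j, fun h => funext fun x => ?_⟩
  simp only [comp_apply, Equiv.swap_apply_def]
  split_ifs <;> simp_all

noncomputable def weightedSqRep {k : ℕ} (w : Fin k → ℕ) (m : ℕ) : ℕ :=
  Nat.card {v : Fin k → ℕ+ // ∑ i, w i * (v i : ℕ) ^ 2 = m}

theorem sqRep_eq_weightedSqRep_one (k m : ℕ) :
    sqRep k m = weightedSqRep (fun _ : Fin k => 1) m := by
  simp only [sqRep, weightedSqRep, one_mul]

theorem finite_weightedSqRep_solutions {k : ℕ} {w : Fin k → ℕ} (hw : ∀ i, 0 < w i) (m : ℕ) :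
    Finite {v : Fin k → ℕ+ // ∑ i, w i * (v i : ℕ) ^ 2 = m} := by
  refine Finite.of_injective (β := Fin k → Fin (m + 1))
    (fun v i => ⟨v.1 i, Nat.lt_succ_of_le ?_⟩) fun v v' h => ?_
  · calc (v.1 i : ℕ) ≤ w i * (v.1 i : ℕ) ^ 2 :=
          (Nat.le_self_pow two_ne_zero _).trans (Nat.le_mul_of_pos_left _ (hw i))
      _ ≤ ∑ j, w j * (v.1 j : ℕ) ^ 2 :=
          Finset.single_le_sum (f := fun j => w j * (v.1 j : ℕ) ^ 2) (fun _ _ => Nat.zero_le _)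
            (Finset.mem_univ i)
      _ = m := v.2
  · exact Subtype.ext (funext fun i => PNat.coe_injective (congrArg Fin.val (congrFun h i)))

theorem weightedSqRep_comp_perm {k : ℕ} (w : Fin k → ℕ) (σ : Equiv.Perm (Fin k)) (m : ℕ) :
    weightedSqRep (w ∘ σ) m = weightedSqRep w m :=
  Nat.card_congr <| (σ.arrowCongr (Equiv.refl ℕ+)).subtypeEquiv fun v => by
    rw [← Equiv.sum_comp σ (fun i => w i * (σ.arrowCongr (Equiv.refl ℕ+) v i : ℕ) ^ 2)]
    simp

theorem weightedSqRep_mul_weights {k : ℕ} (w : Fin k → ℕ) {c : ℕ} (hc : 0 < c) (m : ℕ) :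
    weightedSqRep (fun i => c * w i) (c * m) = weightedSqRep w m :=
  Nat.card_congr <| Equiv.subtypeEquivRight fun v => by
    simp only [mul_assoc, ← Finset.mul_sum, Nat.mul_left_cancel_iff hc]

theorem weightedSqRep_update_four_mul {k : ℕ} (w : Fin k → ℕ) (j : Fin k) {m : ℕ}
    (h : ∀ v : Fin k → ℕ+, ∑ i, w i * (v i : ℕ) ^ 2 = m → 2 ∣ (v j : ℕ)) :
    weightedSqRep (update w j (4 * w j)) m = weightedSqRep w m := by
  have hterm : ∀ (v : Fin k → ℕ+) i,
      w i * (update v j (2 * v j) i : ℕ) ^ 2 = update w j (4 * w j) i * (v i : ℕ) ^ 2 := by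
    intro v i
    rcases eq_or_ne i j with rfl | hij
    · simp only [update_self, PNat.mul_coe, PNat.val_ofNat]
      ring
    · simp only [update_of_ne hij]
  refine Nat.card_eq_of_bijective
    (fun v => ⟨update v.1 j (2 * v.1 j), by simpa only [hterm] using v.2⟩) ⟨?_, ?_⟩
  · intro v v' hvv'
    have h' := congrArg Subtype.val hvv'
    refine Subtype.ext (funext fun i => ?_)
    rcases eq_or_ne i j with rfl | hij
    · simpa using congrFun h' i
    · simpa [update_of_ne hij] using congrFun h' i
  · rintro ⟨v, hv⟩
    obtain ⟨c, hc⟩ := h v hv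
    obtain ⟨u, hu⟩ : ∃ u : ℕ+, 2 * u = v j :=
      ⟨⟨c, by have := (v j).pos; omega⟩, PNat.eq hc.symm⟩
    have hv' : update (update v j u) j (2 * update v j u j) = v := by
      rw [update_idem, update_self, hu, update_eq_self]
    exact ⟨⟨update v j u, by simpa only [← hterm, hv'] using hv⟩, Subtype.ext hv'⟩

theorem weightedSqRep_cons_cons_modEq {k a : ℕ} (ha : 0 < a) {w : Fin k → ℕ}
    (hw : ∀ i, 0 < w i) (m : ℕ) :
    weightedSqRep (Fin.cons a (Fin.cons a w) : Fin (k + 2) → ℕ) m ≡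
      weightedSqRep (Fin.cons (2 * a) w : Fin (k + 1) → ℕ) m [MOD 2] := by
  set w₂ : Fin (k + 2) → ℕ := Fin.cons a (Fin.cons a w)
  set w₁ : Fin (k + 1) → ℕ := Fin.cons (2 * a) w
  have := finite_weightedSqRep_solutions
    (Fin.forall_fin_succ.2 ⟨ha, Fin.forall_fin_succ.2 ⟨ha, hw⟩⟩ : ∀ i, 0 < w₂ i) m
  have hsum : ∀ u : Fin (k + 1) → ℕ+,
      ∑ i, w₂ i * ((Fin.cons (u 0) u : Fin (k + 2) → ℕ+) i : ℕ) ^ 2 =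
        ∑ i, w₁ i * (u i : ℕ) ^ 2 := by
    intro u
    simp only [Fin.sum_univ_succ, Fin.cons_zero, Fin.cons_succ, w₂, w₁]
    ring
  have hcons : ∀ v : Fin (k + 2) → ℕ+, v ∘ Equiv.swap 0 1 = v →
      (Fin.cons (Fin.tail v 0) (Fin.tail v) : Fin (k + 2) → ℕ+) = v := fun v hv => by
    rw [show Fin.tail v 0 = v 0 from (comp_swap_eq_self_iff.1 hv).symm, Fin.cons_self_tail]
  have e : {u : Fin (k + 1) → ℕ+ // ∑ i, w₁ i * (u i : ℕ) ^ 2 = m} ≃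
      {v : Fin (k + 2) → ℕ+ // ∑ i, w₂ i * (v i : ℕ) ^ 2 = m ∧ v ∘ Equiv.swap 0 1 = v} :=
    { toFun := fun u => ⟨Fin.cons (u.1 0) u.1, by rw [hsum]; exact u.2, by
        rw [comp_swap_eq_self_iff]; rfl⟩
      invFun := fun v => ⟨Fin.tail v.1, by rw [← hsum, hcons v.1 v.2.2]; exact v.2.1⟩
      left_inv := fun u => by simp
      right_inv := fun v => Subtype.ext (hcons v.1 v.2.2) }
  have hw₂ : ∀ i, w₂ (Equiv.swap 0 1 i) = w₂ i := congrFun (comp_swap_eq_self_iff.2 rfl)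
  rw [weightedSqRep, weightedSqRep, Nat.card_congr e]
  refine Involutive.card_subtype_modEq_card_fixed (fun v => funext fun i => by simp)
    fun v hv => ?_
  calc ∑ i, w₂ i * ((v ∘ Equiv.swap 0 1) i : ℕ) ^ 2
      = ∑ i, w₂ (Equiv.swap 0 1 i) * (v (Equiv.swap 0 1 i) : ℕ) ^ 2 := by
        simp only [hw₂, comp_apply]
    _ = m := (Equiv.sum_comp _ fun i => w₂ i * (v i : ℕ) ^ 2).trans hv

theorem sqRep_five_modEq (m : ℕ) : sqRep 5 m ≡ weightedSqRep ![4, 1] m [MOD 2] := by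
  have h_swap : (![1, 1, 2, 1] : Fin 4 → ℕ) ∘ Equiv.swap 0 2 = ![2, 1, 1, 1] := by decide
  calc sqRep 5 m = weightedSqRep ![1, 1, 1, 1, 1] m := by
        rw [sqRep_eq_weightedSqRep_one]; congr; decide
    _ ≡ weightedSqRep ![2, 1, 1, 1] m [MOD 2] :=
        weightedSqRep_cons_cons_modEq (w := ![1, 1, 1]) one_pos (by decide) m
    _ = weightedSqRep ![1, 1, 2, 1] m := by rw [← h_swap, weightedSqRep_comp_perm]
    _ ≡ weightedSqRep ![2, 2, 1] m [MOD 2] :=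
        weightedSqRep_cons_cons_modEq (w := ![2, 1]) one_pos (by decide) m
    _ ≡ weightedSqRep ![4, 1] m [MOD 2] :=
        weightedSqRep_cons_cons_modEq (w := ![1]) two_pos (by decide) m

theorem two_dvd_of_sq_add_sq_eq {x y n : ℕ} (h : x ^ 2 + y ^ 2 = n) (h1 : n % 8 ≠ 1)
    (h2 : n % 8 ≠ 2) (h5 : n % 8 ≠ 5) : 2 ∣ x ∧ 2 ∣ y := by
  have hmod : n % 8 = ((x % 8) ^ 2 + (y % 8) ^ 2) % 8 := by
    rw [← h, Nat.add_mod, Nat.pow_mod, Nat.pow_mod y, ← Nat.add_mod]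
  have hx := Nat.mod_lt x (show 8 > 0 by norm_num)
  have hy := Nat.mod_lt y (show 8 > 0 by norm_num)
  interval_cases hx8 : x % 8 <;> interval_cases hy8 : y % 8 <;> omega

theorem weightedSqRep_four_one_four_mul (n : ℕ) :
    weightedSqRep ![4, 1] (4 * n) = weightedSqRep ![1, 1] n :=
  calc weightedSqRep ![4, 1] (4 * n) = weightedSqRep ![4, 4] (4 * n) := by
        refine (weightedSqRep_update_four_mul ![4, 1] 1 fun v hv => ?_).symm.trans ?_
        · simp only [Fin.sum_univ_two, Matrix.cons_val_zero, Matrix.cons_val_one] at hv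
          exact (two_dvd_of_sq_add_sq_eq (x := 2 * v 0) (n := 4 * n) (by rw [← hv]; ring)
            (by omega) (by omega) (by omega)).2
        · congr 1; decide
    _ = weightedSqRep ![1, 1] n := weightedSqRep_mul_weights ![1, 1] four_pos n

theorem weightedSqRep_four_one_eq {n : ℕ} (h1 : n % 8 ≠ 1) (h2 : n % 8 ≠ 2)
    (h5 : n % 8 ≠ 5) : weightedSqRep ![4, 1] n = weightedSqRep ![1, 1] n := by
  refine (congrArg (weightedSqRep · n) (by decide)).trans
    (weightedSqRep_update_four_mul ![1, 1] 0 fun v hv => ?_)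
  simp only [Fin.sum_univ_two, Matrix.cons_val_zero, Matrix.cons_val_one, one_mul] at hv
  exact (two_dvd_of_sq_add_sq_eq hv h1 h2 h5).1

theorem c5_four_mul_mod_two_general (n : ℕ)
    (h1 : n % 8 ≠ 1) (h2 : n % 8 ≠ 2) (h5 : n % 8 ≠ 5) :
    sqRep 5 (4 * n) ≡ sqRep 5 n [MOD 2] :=
  calc sqRep 5 (4 * n) ≡ weightedSqRep ![4, 1] (4 * n) [MOD 2] := sqRep_five_modEq _
    _ = weightedSqRep ![4, 1] n := by
      rw [weightedSqRep_four_one_four_mul, weightedSqRep_four_one_eq h1 h2 h5]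
    _ ≡ sqRep 5 n [MOD 2] := (sqRep_five_modEq n).symm

theorem c5_four_mul_mod_two (n : ℕ) (hn : 0 < n)
    (h1 : n % 8 ≠ 1) (h2 : n % 8 ≠ 2) (h5 : n % 8 ≠ 5) :
    sqRep 5 (4 * n) ≡ sqRep 5 n [MOD 2] :=
  c5_four_mul_mod_two_general n h1 h2 h5
end
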